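/- arXiv:2007.12448 — 2 statements merged into one kernel-verified Lean document; each statement's English description precedes it below -/
import Mathlib

section
/- The function q ↦ φ(Φ⁻¹(q)) is twice differentiable on (0,1) with second derivative ∂²φ(Φ⁻¹(q))/∂q² = −1/φ(Φ⁻¹(q)) for all q ∈ (0,1); in particular, q ↦ φ(Φ⁻¹(q)) is strictly concave on (0,1). -/
open MeasureTheory ProbabilityTheory Set Filter Topology

noncomputable def stdphi (x : ℝ) : ℝ := Real.exp (-(x ^ 2) / 2) / Real.sqrt (2 * Real.pi)

noncomputable def stdPhi (x : ℝ) : ℝ := ∫ t in Iic x, stdphi t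

noncomputable def stdPhiInv : ℝ → ℝ := Function.invFun stdPhi

noncomputable def stdPhiE (c : EReal) (x s : ℝ) : ℝ :=
  if c = ⊤ then 1 else if c = ⊥ then 0 else stdPhi ((c.toReal - x) / s)

def truncOrdered {k : ℕ} (a b : Fin k → EReal) : Prop :=
  (∀ i, a i < b i) ∧ ∀ i j : Fin k, i < j → b i < a j

def truncSet {k : ℕ} (a b : Fin k → EReal) : Set ℝ :=
  {x : ℝ | ∃ i, a i < (x : EReal) ∧ (x : EReal) < b i}

noncomputable def truncSum {k : ℕ} (a b : Fin k → EReal) (s x : ℝ) : ℝ :=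
  ∑ i, (stdPhiE (b i) x s - stdPhiE (a i) x s)

noncomputable def condPDF {k : ℕ} (a b : Fin k → EReal) (σ τ μ x : ℝ) : ℝ :=
  (1 / σ) * stdphi ((x - μ) / σ) * truncSum a b τ x
    / truncSum a b (Real.sqrt (σ ^ 2 + τ ^ 2)) μ

noncomputable def Fmu {k : ℕ} (a b : Fin k → EReal) (σ τ μ x : ℝ) : ℝ :=
  ∫ u in Iic x, condPDF a b σ τ μ u

/-- `G_μ(x,v) = Φ((x - (ρ²μ + (1-ρ²)v))/(σρ))` with `ρ² = τ²/(σ²+τ²)`. -/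
noncomputable def Gfun (σ τ μ x v : ℝ) : ℝ :=
  stdPhi ((x - (τ ^ 2 / (σ ^ 2 + τ ^ 2) * μ + (1 - τ ^ 2 / (σ ^ 2 + τ ^ 2)) * v)) /
    (σ * Real.sqrt (τ ^ 2 / (σ ^ 2 + τ ^ 2))))

/-- `G_μ(x,v)` for an extended-real `v`, with the natural conventions at `±∞`. -/
noncomputable def GfunE (σ τ μ x : ℝ) (c : EReal) : ℝ :=
  if c = ⊤ then 0 else if c = ⊥ then 1 else Gfun σ τ μ x c.toReal

/-- `h(v)` from Lemma `le_dmu_formula`. -/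
noncomputable def hfun {k : ℕ} (a b : Fin k → EReal) (σ τ μ v : ℝ) : ℝ :=
  (1 / Real.sqrt (σ ^ 2 + τ ^ 2)) * stdphi ((v - μ) / Real.sqrt (σ ^ 2 + τ ^ 2)) /
    truncSum a b (Real.sqrt (σ ^ 2 + τ ^ 2)) μ

/-- `h(v)` for an extended-real `v`, with the convention `φ(±∞) = 0`. -/
noncomputable def hfunE {k : ℕ} (a b : Fin k → EReal) (σ τ μ : ℝ) (c : EReal) : ℝ :=
  if c = ⊤ then 0 else if c = ⊥ then 0 else hfun a b σ τ μ c.toReal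

/-- `l(x,v)` from Lemma `le_dens_dx`. -/
noncomputable def lfun {k : ℕ} (a b : Fin k → EReal) (τ x v : ℝ) : ℝ :=
  (1 / τ) * stdphi ((v - x) / τ) / truncSum a b τ x

/-- `l(x,v)` for an extended-real `v`, with the convention `φ(±∞) = 0`. -/
noncomputable def lfunE {k : ℕ} (a b : Fin k → EReal) (τ x : ℝ) (c : EReal) : ℝ :=
  if c = ⊤ then 0 else if c = ⊥ then 0 else lfun a b τ x c.toReal

/-- The function `B_μ(x)` from the proof of Proposition 1. -/
noncomputable def Bfun {k : ℕ} (a b : Fin k → EReal) (σ τ μ x : ℝ) : ℝ :=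
  Real.sqrt (τ ^ 2 / (σ ^ 2 + τ ^ 2)) / σ * stdphi (stdPhiInv (Fmu a b σ τ μ x))
    - condPDF a b σ τ μ x
    + ∑ i, (hfunE a b σ τ μ (b i) * (Fmu a b σ τ μ x - GfunE σ τ μ x (b i))
        - hfunE a b σ τ μ (a i) * (Fmu a b σ τ μ x - GfunE σ τ μ x (a i)))

lemma stdphi_pos (x : ℝ) : 0 < stdphi x := by
  unfold stdphi
  positivity

lemma stdphi_cont : Continuous stdphi := by
  unfold stdphi; fun_prop

lemma stdphi_integrable : Integrable stdphi := by
  have h : Integrable (fun x : ℝ => Real.exp (-(1/2 : ℝ) * x ^ 2)) :=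
    integrable_exp_neg_mul_sq (by norm_num)
  have h2 := h.div_const (Real.sqrt (2 * Real.pi))
  refine h2.congr (Filter.Eventually.of_forall fun x => ?_)
  unfold stdphi; ring_nf

lemma stdphi_total : ∫ x, stdphi x = 1 := by
  have h := integral_gaussian (1/2 : ℝ)
  unfold stdphi
  rw [MeasureTheory.integral_div]
  have : (fun x : ℝ => Real.exp (-(x ^ 2) / 2)) = fun x : ℝ => Real.exp (-(1/2) * x ^ 2) := by
    funext x; ring_nf
  rw [this, h]
  rw [show Real.pi / (1/2) = 2 * Real.pi by ring]
  exact div_self (Real.sqrt_ne_zero'.2 (by positivity))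

lemma stdPhi_eq (y : ℝ) : stdPhi y = stdPhi 0 + ∫ t in (0:ℝ)..y, stdphi t := by
  have := intervalIntegral.integral_Iic_sub_Iic (stdphi_integrable.integrableOn (s := Iic 0))
    (stdphi_integrable.integrableOn (s := Iic y))
  unfold stdPhi
  linarith [this]

lemma hasDerivAt_stdPhi (x : ℝ) : HasDerivAt stdPhi (stdphi x) x := by
  have hd : HasDerivAt (fun y => ∫ t in (0:ℝ)..y, stdphi t) (stdphi x) x :=
    intervalIntegral.integral_hasDerivAt_right (stdphi_integrable.intervalIntegrable)
      (stdphi_cont.stronglyMeasurableAtFilter _ _) stdphi_cont.continuousAt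
  have := (hasDerivAt_const x (stdPhi 0)).add hd
  simpa using this.congr_of_eventuallyEq (Filter.Eventually.of_forall fun y => stdPhi_eq y)

lemma stdPhi_mono : StrictMono stdPhi :=
  strictMono_of_deriv_pos fun x => by
    rw [(hasDerivAt_stdPhi x).deriv]; exact stdphi_pos x

lemma stdPhi_tendsto_one : Tendsto stdPhi atTop (𝓝 1) := by
  have h := intervalIntegral_tendsto_integral_Ioi (0:ℝ)
    (stdphi_integrable.integrableOn (s := Ioi 0)) tendsto_id
  have h2 : Tendsto (fun b => stdPhi 0 + ∫ x in (0:ℝ)..b, stdphi x) atTop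
      (𝓝 (stdPhi 0 + ∫ x in Ioi (0:ℝ), stdphi x)) := tendsto_const_nhds.add h
  have key : stdPhi 0 + ∫ x in Ioi (0:ℝ), stdphi x = 1 := by
    rw [show stdPhi 0 = ∫ x in Iic (0:ℝ), stdphi x from rfl,
      intervalIntegral.integral_Iic_add_Ioi (stdphi_integrable.integrableOn) (stdphi_integrable.integrableOn)]
    exact stdphi_total
  rw [← key]
  exact h2.congr fun b => (stdPhi_eq b).symm

lemma stdPhi_tendsto_zero : Tendsto stdPhi atBot (𝓝 0) := by
  have h := intervalIntegral_tendsto_integral_Iic (0:ℝ)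
    (stdphi_integrable.integrableOn (s := Iic 0)) tendsto_id
  have h2 : Tendsto (fun a => stdPhi 0 - ∫ x in a..(0:ℝ), stdphi x) atBot
      (𝓝 (stdPhi 0 - ∫ x in Iic (0:ℝ), stdphi x)) := tendsto_const_nhds.sub h
  have key : stdPhi 0 - ∫ x in Iic (0:ℝ), stdphi x = 0 := by
    rw [show stdPhi 0 = ∫ x in Iic (0:ℝ), stdphi x from rfl]; ring
  rw [← key]
  refine h2.congr fun a => ?_
  have := intervalIntegral.integral_Iic_sub_Iic (stdphi_integrable.integrableOn (s := Iic a))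
    (stdphi_integrable.integrableOn (s := Iic 0))
  unfold stdPhi; linarith [this]

lemma stdPhi_nonneg (x : ℝ) : 0 ≤ stdPhi x :=
  setIntegral_nonneg measurableSet_Iic fun t _ => (stdphi_pos t).le

lemma stdPhi_le_one (x : ℝ) : stdPhi x ≤ 1 :=
  ge_of_tendsto stdPhi_tendsto_one (Filter.eventually_atTop.2
    ⟨x, fun z hz => stdPhi_mono.monotone hz⟩)

lemma stdPhi_mem_Ioo (x : ℝ) : stdPhi x ∈ Ioo (0:ℝ) 1 :=
  ⟨lt_of_le_of_lt (stdPhi_nonneg (x - 1)) (stdPhi_mono (by linarith)),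
   lt_of_lt_of_le (stdPhi_mono (show x < x + 1 by linarith)) (stdPhi_le_one (x + 1))⟩

lemma stdPhi_surj {q : ℝ} (hq : q ∈ Ioo (0:ℝ) 1) : ∃ x, stdPhi x = q := by
  obtain ⟨A, hA⟩ := (stdPhi_tendsto_zero.eventually_lt_const hq.1).exists
  obtain ⟨B, hB⟩ := (stdPhi_tendsto_one.eventually_const_lt hq.2).exists
  have hAB : A ≤ B := (stdPhi_mono.lt_iff_lt.1 (hA.trans hB)).le
  have := intermediate_value_Icc hAB
    (fun y _ => (hasDerivAt_stdPhi y).continuousAt.continuousWithinAt)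
  obtain ⟨x, _, hx⟩ := this ⟨hA.le, hB.le⟩
  exact ⟨x, hx⟩

lemma stdPhi_stdPhiInv {q : ℝ} (hq : q ∈ Ioo (0:ℝ) 1) : stdPhi (stdPhiInv q) = q :=
  Function.invFun_eq (stdPhi_surj hq)

lemma stdPhiInv_stdPhi (x : ℝ) : stdPhiInv (stdPhi x) = x :=
  Function.leftInverse_invFun stdPhi_mono.injective x

lemma stdPhiInv_strictMonoOn : StrictMonoOn stdPhiInv (Ioo (0:ℝ) 1) := fun p hp q hq hpq => by
  rw [← stdPhi_mono.lt_iff_lt, stdPhi_stdPhiInv hp, stdPhi_stdPhiInv hq]; exact hpq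

lemma stdPhiInv_continuousAt {q : ℝ} (hq : q ∈ Ioo (0:ℝ) 1) : ContinuousAt stdPhiInv q := by
  refine stdPhiInv_strictMonoOn.continuousAt_of_image_mem_nhds
    (Ioo_mem_nhds hq.1 hq.2) ?_
  have himg : stdPhiInv '' Ioo (0:ℝ) 1 = univ :=
    eq_univ_of_forall fun x => ⟨stdPhi x, stdPhi_mem_Ioo x, stdPhiInv_stdPhi x⟩
  rw [himg]; exact univ_mem

lemma hasDerivAt_stdPhiInv {q : ℝ} (hq : q ∈ Ioo (0:ℝ) 1) :
    HasDerivAt stdPhiInv (stdphi (stdPhiInv q))⁻¹ q :=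
  HasDerivAt.of_local_left_inverse (stdPhiInv_continuousAt hq) (hasDerivAt_stdPhi _)
    (stdphi_pos _).ne'
    (Filter.eventually_of_mem (Ioo_mem_nhds hq.1 hq.2) fun p hp => stdPhi_stdPhiInv hp)

lemma hasDerivAt_stdphi (x : ℝ) : HasDerivAt stdphi (-x * stdphi x) x := by
  have h1 : HasDerivAt (fun y : ℝ => -(y ^ 2) / 2) (-x) x := by
    have := ((hasDerivAt_pow 2 x).neg).div_const 2
    simpa using this.congr_deriv (by ring)
  have h2 := (h1.exp).div_const (Real.sqrt (2 * Real.pi))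
  refine h2.congr_deriv ?_
  unfold stdphi; ring

/-- The map `q ↦ φ(Φ⁻¹(q))` is twice differentiable on `(0,1)` with second derivative
`-1/φ(Φ⁻¹(q))`; in particular it is strictly concave on `(0,1)`. -/
theorem stmt10 :
    ∃ D : ℝ → ℝ,
      (∀ q ∈ Ioo (0 : ℝ) 1, HasDerivAt (fun p => stdphi (stdPhiInv p)) (D q) q) ∧
      (∀ q ∈ Ioo (0 : ℝ) 1, HasDerivAt D (-(1 / stdphi (stdPhiInv q))) q) ∧
      StrictConcaveOn ℝ (Ioo (0 : ℝ) 1) (fun q => stdphi (stdPhiInv q)) := by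
  have hmain : ∀ q ∈ Ioo (0:ℝ) 1,
      HasDerivAt (fun p => stdphi (stdPhiInv p)) (-stdPhiInv q) q := by
    intro q hq
    have h := (hasDerivAt_stdphi (stdPhiInv q)).comp q (hasDerivAt_stdPhiInv hq)
    have hne : stdphi (stdPhiInv q) ≠ 0 := (stdphi_pos _).ne'
    have : -stdPhiInv q * stdphi (stdPhiInv q) * (stdphi (stdPhiInv q))⁻¹ = -stdPhiInv q := by
      field_simp
    rw [this] at h
    exact h
  refine ⟨fun q => -stdPhiInv q, fun q hq => hmain q hq, ?_, ?_⟩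
  · intro q hq
    have h := (hasDerivAt_stdPhiInv hq).neg
    refine h.congr_deriv ?_
    rw [one_div]
  · refine StrictAntiOn.strictConcaveOn_of_deriv (convex_Ioo 0 1) ?_ ?_
    · exact fun q hq => (hmain q hq).continuousAt.continuousWithinAt
    · rw [interior_Ioo]
      intro p hp q hq hpq
      rw [(hmain p hp).deriv, (hmain q hq).deriv, neg_lt_neg_iff]
      exact stdPhiInv_strictMonoOn hp hq hpq
end

section
/- Let X ~ N(μ,σ²) and U ~ N(0,τ²) be independent. Then P(X + U ∈ T) > 0 and, for every x ∈ ℝ, the conditional c.d.f. satisfies P(X ≤ x | X + U ∈ T) = ∫_{−∞}^x (1/σ)·φ((u−μ)/σ)·[Σ_{i=1}^k (Φ((b_i−u)/τ) − Φ((a_i−u)/τ))] / [Σ_{i=1}^k (Φ((b_i−μ)/√(σ²+τ²)) − Φ((a_i−μ)/√(σ²+τ²)))] du; i.e., the conditional distribution of X given {X+U ∈ T} has Lebesgue density f_μ. -/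
open MeasureTheory ProbabilityTheory Set Filter Topology

/-!
Conditioning on `X`, `P(X ∈ D, X + U ∈ T) = ∫_D φ_X(u) P(u + U ∈ T) du`, and `P(u + U ∈ T)` is the
`N(u, τ²)`-mass of the disjoint intervals of `T`, which is `truncSum a b τ u`. Since
`X + U ~ N(μ, σ² + τ²)`, the normalising constant is `P(X + U ∈ T) = truncSum a b √(σ²+τ²) μ`,
positive because `T` is a nonempty open set and the Gaussian law charges every such set.
-/

lemma stdphi_eq_gaussianPDFReal : stdphi = gaussianPDFReal 0 1 := by
  ext x
  simp [stdphi, gaussianPDFReal, div_eq_inv_mul, mul_comm]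

lemma gaussianPDFReal_eq_stdphi (m : ℝ) {sd : ℝ} (hsd : 0 < sd) (x : ℝ) :
    gaussianPDFReal m (sd ^ 2).toNNReal x = 1 / sd * stdphi ((x - m) / sd) := by
  rw [gaussianPDFReal, stdphi, Real.coe_toNNReal _ (sq_nonneg sd),
    Real.sqrt_mul (by positivity), Real.sqrt_sq hsd.le]
  field_simp

lemma toNNReal_sq_ne_zero {sd : ℝ} (hsd : 0 < sd) : (sd ^ 2).toNNReal ≠ 0 := by
  simpa using hsd.ne'

lemma stdPhi_eq_measureReal_Iic (x : ℝ) : stdPhi x = (gaussianReal 0 1).real (Iic x) := by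
  rw [measureReal_def, gaussianReal_apply_eq_integral 0 one_ne_zero,
    ENNReal.toReal_ofReal (integral_nonneg fun _ => gaussianPDFReal_nonneg _ _ _), stdPhi,
    stdphi_eq_gaussianPDFReal]

lemma map_gaussianReal_standardize (m : ℝ) {sd : ℝ} (hsd : 0 < sd) :
    (gaussianReal m (sd ^ 2).toNNReal).map (fun x => (x - m) / sd) = gaussianReal 0 1 := by
  have : (fun x => (x - m) / sd) = (· / sd) ∘ (· - m) := rfl
  rw [this, ← Measure.map_map (by fun_prop) (by fun_prop), gaussianReal_map_sub_const,
    gaussianReal_map_div_const, sub_self, zero_div]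
  congr 1
  ext
  simp [Real.coe_toNNReal _ (sq_nonneg sd), hsd.ne']

lemma gaussianReal_real_Iic (m : ℝ) {sd : ℝ} (hsd : 0 < sd) (r : ℝ) :
    (gaussianReal m (sd ^ 2).toNNReal).real (Iic r) = stdPhi ((r - m) / sd) := by
  have hpre : (fun x => (x - m) / sd) ⁻¹' Iic ((r - m) / sd) = Iic r := by
    ext x; simp [div_le_div_iff_of_pos_right hsd]
  rw [stdPhi_eq_measureReal_Iic, ← map_gaussianReal_standardize m hsd,
    map_measureReal_apply (by fun_prop) measurableSet_Iic, hpre]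

section ERealInterval

variable {ν : Measure ℝ} [IsProbabilityMeasure ν] {F : EReal → ℝ}

lemma measureReal_coe_le (hbot : F ⊥ = 0) (htop : F ⊤ = 1)
    (hF : ∀ r : ℝ, F r = ν.real (Iic r)) (c : EReal) :
    ν.real {x : ℝ | (x : EReal) ≤ c} = F c := by
  induction c using EReal.rec with
  | bot => simp [hbot]
  | coe r => simp only [EReal.coe_le_coe_iff, hF]; rfl
  | top => simp [htop]

lemma measureReal_coe_lt [NullSingletonClass ν] (hbot : F ⊥ = 0) (htop : F ⊤ = 1)
    (hF : ∀ r : ℝ, F r = ν.real (Iic r)) (d : EReal) :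
    ν.real {x : ℝ | (x : EReal) < d} = F d := by
  induction d using EReal.rec with
  | bot => simp [hbot]
  | coe r => simp only [EReal.coe_lt_coe_iff, hF]; exact measureReal_congr Iio_ae_eq_Iic
  | top => simp [htop]

lemma measureReal_coe_Ioo [NullSingletonClass ν] (hbot : F ⊥ = 0) (htop : F ⊤ = 1)
    (hF : ∀ r : ℝ, F r = ν.real (Iic r)) {c d : EReal} (hcd : c < d) :
    ν.real {x : ℝ | c < (x : EReal) ∧ (x : EReal) < d} = F d - F c := by
  have hsub : {x : ℝ | (x : EReal) ≤ c} ⊆ {x : ℝ | (x : EReal) < d} :=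
    fun _ hx => hx.trans_lt hcd
  have hmeas : MeasurableSet {x : ℝ | (x : EReal) ≤ c} :=
    measurable_coe_real_ereal measurableSet_Iic
  have hset : {x : ℝ | c < (x : EReal) ∧ (x : EReal) < d}
      = {x : ℝ | (x : EReal) < d} \ {x : ℝ | (x : EReal) ≤ c} := by
    ext x; simp [and_comm]
  rw [hset, measureReal_sdiff hsub hmeas, measureReal_coe_lt hbot htop hF,
    measureReal_coe_le hbot htop hF]

end ERealInterval

section TruncSet

variable {k : ℕ} {a b : Fin k → EReal}

lemma truncSet_eq_iUnion (a b : Fin k → EReal) :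
    truncSet a b = ⋃ i, {x : ℝ | a i < (x : EReal) ∧ (x : EReal) < b i} := by
  ext x; simp [truncSet]

lemma isOpen_truncSet (a b : Fin k → EReal) : IsOpen (truncSet a b) := by
  rw [truncSet_eq_iUnion]
  exact isOpen_iUnion fun i => isOpen_Ioo.preimage continuous_coe_real_ereal

lemma measurableSet_truncSet (a b : Fin k → EReal) : MeasurableSet (truncSet a b) :=
  (isOpen_truncSet a b).measurableSet

lemma truncSet_nonempty {a b : Fin (k + 1) → EReal} (hab : truncOrdered a b) :
    (truncSet a b).Nonempty := by
  obtain ⟨x, hax, hxb⟩ := EReal.lt_iff_exists_real_btwn.1 (hab.1 0)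
  exact ⟨x, 0, hax, hxb⟩

lemma truncOrdered.pairwise_disjoint (hab : truncOrdered a b) :
    Pairwise (Function.onFun Disjoint
      fun i => {x : ℝ | a i < (x : EReal) ∧ (x : EReal) < b i}) := by
  intro i j hij
  wlog h : i < j generalizing i j
  · exact (this hij.symm (hij.lt_or_gt.resolve_left h)).symm
  exact Set.disjoint_left.2 fun x hxi hxj => (hxi.2.trans (hab.2 i j h)).not_gt hxj.1

lemma measureReal_truncSet {ν : Measure ℝ} [IsProbabilityMeasure ν] [NullSingletonClass ν]
    {F : EReal → ℝ} (hbot : F ⊥ = 0) (htop : F ⊤ = 1) (hF : ∀ r : ℝ, F r = ν.real (Iic r))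
    (hab : truncOrdered a b) :
    ν.real (truncSet a b) = ∑ i, (F (b i) - F (a i)) := by
  rw [truncSet_eq_iUnion, measureReal_iUnion_fintype hab.pairwise_disjoint
    fun i => measurable_coe_real_ereal measurableSet_Ioo]
  exact Finset.sum_congr rfl fun i _ => measureReal_coe_Ioo hbot htop hF (hab.1 i)

lemma gaussianReal_real_truncSet (hab : truncOrdered a b) (m : ℝ) {sd : ℝ} (hsd : 0 < sd) :
    (gaussianReal m (sd ^ 2).toNNReal).real (truncSet a b) = truncSum a b sd m := by
  have := nullSingletonClass_gaussianReal (μ := m) (toNNReal_sq_ne_zero hsd)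
  refine measureReal_truncSet (F := fun c => stdPhiE c m sd) (by simp [stdPhiE]) rfl
    (fun r => ?_) hab
  simp [stdPhiE, gaussianReal_real_Iic m hsd]

end TruncSet

lemma setIntegral_gaussianReal_eq (m : ℝ) {v : NNReal} (hv : v ≠ 0) (g : ℝ → ℝ) (D : Set ℝ) :
    ∫ x in D, g x ∂gaussianReal m v = ∫ x in D, gaussianPDFReal m v x * g x := by
  rw [gaussianReal_of_var_ne_zero _ hv, setIntegral_withDensity_eq_setIntegral_toReal_smul' D
    (measurable_gaussianPDF _ _) (ae_of_all _ fun _ => gaussianPDF_lt_top)]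
  simp

lemma measurable_measureReal_gaussianReal (v : NNReal) {s : Set ℝ} (hs : MeasurableSet s) :
    Measurable fun m => (gaussianReal m v).real s := by
  have hmeas : Measurable fun m => gaussianReal m v :=
    measurable_gaussianReal.comp (measurable_id.prodMk measurable_const)
  exact (Measure.measurable_measure.1 hmeas s hs).ennreal_toReal

lemma gaussianReal_pos_of_isOpen (m : ℝ) {v : NNReal} (hv : v ≠ 0) {s : Set ℝ} (hs : IsOpen s)
    (hne : s.Nonempty) : 0 < gaussianReal m v s :=
  pos_iff_ne_zero.2 fun h =>
    hs.measure_ne_zero volume hne (gaussianReal_absolutelyContinuous' m hv h)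

lemma measure_mem_inter_add_mem_eq_lintegral {Ω : Type*} [MeasurableSpace Ω] {P : Measure Ω}
    [IsFiniteMeasure P] {X U : Ω → ℝ} (hX : Measurable X) (hU : Measurable U)
    (hindep : IndepFun X U P) {D T : Set ℝ} (hD : MeasurableSet D) (hT : MeasurableSet T) :
    P ({ω | X ω ∈ D} ∩ {ω | X ω + U ω ∈ T})
      = ∫⁻ u in D, P.map U ((u + ·) ⁻¹' T) ∂P.map X := by
  have hS : MeasurableSet {p : ℝ × ℝ | p.1 ∈ D ∧ p.1 + p.2 ∈ T} :=
    (measurable_fst hD).inter ((measurable_fst.add measurable_snd) hT)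
  have hmap : P.map (fun ω => (X ω, U ω)) = (P.map X).prod (P.map U) :=
    (indepFun_iff_map_prod_eq_prod_map_map hX.aemeasurable hU.aemeasurable).1 hindep
  rw [show {ω | X ω ∈ D} ∩ {ω | X ω + U ω ∈ T}
      = (fun ω => (X ω, U ω)) ⁻¹' {p : ℝ × ℝ | p.1 ∈ D ∧ p.1 + p.2 ∈ T} from rfl,
    ← Measure.map_apply (hX.prodMk hU) hS, hmap, Measure.prod_apply hS,
    ← lintegral_indicator hD]
  refine lintegral_congr fun u => ?_
  by_cases hu : u ∈ D
  · rw [indicator_of_mem hu]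
    congr 1
    ext t
    simp [hu]
  · simp [hu]

section GaussianTruncSum

variable {k : ℕ} {a b : Fin k → EReal}

lemma truncSum_nonneg (hab : truncOrdered a b) {sd : ℝ} (hsd : 0 < sd) (m : ℝ) :
    0 ≤ truncSum a b sd m :=
  gaussianReal_real_truncSet hab m hsd ▸ measureReal_nonneg

lemma truncSum_le_one (hab : truncOrdered a b) {sd : ℝ} (hsd : 0 < sd) (m : ℝ) :
    truncSum a b sd m ≤ 1 :=
  gaussianReal_real_truncSet hab m hsd ▸ measureReal_le_one

lemma truncSum_pos {a b : Fin (k + 1) → EReal} (hab : truncOrdered a b) {sd : ℝ} (hsd : 0 < sd)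
    (m : ℝ) : 0 < truncSum a b sd m := by
  rw [← gaussianReal_real_truncSet hab m hsd]
  exact ENNReal.toReal_pos (gaussianReal_pos_of_isOpen m (toNNReal_sq_ne_zero hsd)
    (isOpen_truncSet a b) (truncSet_nonempty hab)).ne' (measure_ne_top _ _)

lemma measurable_truncSum (hab : truncOrdered a b) {sd : ℝ} (hsd : 0 < sd) :
    Measurable (truncSum a b sd) := by
  rw [show truncSum a b sd = fun m => (gaussianReal m (sd ^ 2).toNNReal).real (truncSet a b) from
    funext fun m => (gaussianReal_real_truncSet hab m hsd).symm]
  exact measurable_measureReal_gaussianReal _ (measurableSet_truncSet a b)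

end GaussianTruncSum

section Model

variable {k : ℕ} {a b : Fin k → EReal} {σ τ μ : ℝ}
  {Ω : Type*} [MeasurableSpace Ω] {P : Measure Ω} [IsProbabilityMeasure P] {X U : Ω → ℝ}

lemma measure_mem_inter_add_mem_truncSet (hab : truncOrdered a b) (hσ : 0 < σ) (hτ : 0 < τ)
    (hX : Measurable X) (hU : Measurable U) (hindep : IndepFun X U P)
    (hXlaw : P.map X = gaussianReal μ (σ ^ 2).toNNReal)
    (hUlaw : P.map U = gaussianReal 0 (τ ^ 2).toNNReal)
    {D : Set ℝ} (hD : MeasurableSet D) :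
    P ({ω | X ω ∈ D} ∩ {ω | X ω + U ω ∈ truncSet a b})
      = ENNReal.ofReal (∫ u in D, gaussianPDFReal μ (σ ^ 2).toNNReal u * truncSum a b τ u) := by
  have hT := measurableSet_truncSet a b
  have hkernel : ∀ u, gaussianReal 0 (τ ^ 2).toNNReal ((u + ·) ⁻¹' truncSet a b)
      = ENNReal.ofReal (truncSum a b τ u) := fun u => by
    rw [← Measure.map_apply (measurable_const_add u) hT, gaussianReal_map_const_add, zero_add,
      ← gaussianReal_real_truncSet hab u hτ, ofReal_measureReal]
  have hint : Integrable (truncSum a b τ) ((gaussianReal μ (σ ^ 2).toNNReal).restrict D) :=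
    .of_bound (measurable_truncSum hab hτ).aestronglyMeasurable 1 (ae_of_all _ fun u => by
      rw [Real.norm_of_nonneg (truncSum_nonneg hab hτ u)]
      exact truncSum_le_one hab hτ u)
  rw [measure_mem_inter_add_mem_eq_lintegral hX hU hindep hD hT, hXlaw, hUlaw]
  simp_rw [hkernel]
  rw [← ofReal_integral_eq_lintegral_ofReal hint (ae_of_all _ (truncSum_nonneg hab hτ)),
    setIntegral_gaussianReal_eq μ (toNNReal_sq_ne_zero hσ)]

lemma measure_add_mem_truncSet (hab : truncOrdered a b) (hσ : 0 < σ) (hτ : 0 < τ)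
    (hX : Measurable X) (hU : Measurable U) (hindep : IndepFun X U P)
    (hXlaw : P.map X = gaussianReal μ (σ ^ 2).toNNReal)
    (hUlaw : P.map U = gaussianReal 0 (τ ^ 2).toNNReal) :
    P {ω | X ω + U ω ∈ truncSet a b}
      = ENNReal.ofReal (truncSum a b (Real.sqrt (σ ^ 2 + τ ^ 2)) μ) := by
  have hvar : (σ ^ 2).toNNReal + (τ ^ 2).toNNReal = (Real.sqrt (σ ^ 2 + τ ^ 2) ^ 2).toNNReal := by
    rw [Real.sq_sqrt (by positivity), Real.toNNReal_add (sq_nonneg σ) (sq_nonneg τ)]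
  rw [← gaussianReal_real_truncSet hab μ (by positivity), ← hvar, ← add_zero μ,
    ← gaussianReal_add_gaussianReal_of_indepFun hindep hXlaw hUlaw, ofReal_measureReal,
    Measure.map_apply (hX.add hU) (measurableSet_truncSet a b)]
  rfl

end Model

lemma setIntegral_condPDF {k : ℕ} (a b : Fin k → EReal) {σ : ℝ} (hσ : 0 < σ) (τ μ : ℝ)
    (D : Set ℝ) :
    ∫ u in D, condPDF a b σ τ μ u
      = (∫ u in D, gaussianPDFReal μ (σ ^ 2).toNNReal u * truncSum a b τ u)
          / truncSum a b (Real.sqrt (σ ^ 2 + τ ^ 2)) μ := by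
  rw [← integral_div]
  simp only [condPDF, gaussianPDFReal_eq_stdphi μ hσ]

/-- If `X ~ N(μ,σ²)` and `U ~ N(0,τ²)` are independent, then `P(X + U ∈ T) > 0` and the
conditional c.d.f. of `X` given `X + U ∈ T` is `x ↦ ∫_{-∞}^x f_μ(u) du`. -/
theorem stmt14 {k : ℕ} (a b : Fin (k + 1) → EReal) (hab : truncOrdered a b)
    (σ τ : ℝ) (hσ : 0 < σ) (hτ : 0 < τ) (μ : ℝ)
    {Ω : Type*} [MeasurableSpace Ω] (P : Measure Ω) [IsProbabilityMeasure P]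
    (X U : Ω → ℝ) (hX : Measurable X) (hU : Measurable U) (hindep : IndepFun X U P)
    (hXlaw : Measure.map X P = gaussianReal μ ((σ ^ 2).toNNReal))
    (hUlaw : Measure.map U P = gaussianReal 0 ((τ ^ 2).toNNReal)) :
    0 < P {ω | X ω + U ω ∈ truncSet a b} ∧
    ∀ x : ℝ,
      P[|{ω | X ω + U ω ∈ truncSet a b}] {ω | X ω ≤ x}
        = ENNReal.ofReal (∫ u in Iic x, condPDF a b σ τ μ u) := by
  have hZ : 0 < truncSum a b (Real.sqrt (σ ^ 2 + τ ^ 2)) μ :=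
    truncSum_pos hab (by positivity) μ
  have hPS := measure_add_mem_truncSet hab hσ hτ hX hU hindep hXlaw hUlaw
  have hS : MeasurableSet {ω | X ω + U ω ∈ truncSet a b} :=
    (hX.add hU) (measurableSet_truncSet a b)
  refine ⟨hPS ▸ ENNReal.ofReal_pos.2 hZ, fun x => ?_⟩
  rw [cond_apply hS, hPS, inter_comm,
    show {ω | X ω ≤ x} = {ω | X ω ∈ Iic x} from rfl,
    measure_mem_inter_add_mem_truncSet hab hσ hτ hX hU hindep hXlaw hUlaw measurableSet_Iic,
    setIntegral_condPDF a b hσ, ENNReal.ofReal_div_of_pos hZ, ENNReal.div_eq_inv_mul]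
end
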